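/- arXiv:2008.06689 — 5 statements merged into one kernel-verified Lean document; each statement's English description precedes it below -/
import Mathlib

section
/- If simple arcs R and L share an endpoint a, are otherwise disjoint, and their union I = R ∪ L is a quasi-arc, then R and L are transverse at a; that is, for any sequences uₙ ∈ R and vₙ ∈ L converging to a (with uₙ, vₙ ≠ a), the ratio (uₙ − a)/(vₙ − a) does not converge to 1. -/
open Set Filter Topology

/-- A simple arc in `ℂ`: homeomorphic image of `[0,1]`. -/
def IsSimpleArc (A : Set ℂ) : Prop :=
  ∃ ξ : ℝ → ℂ, ContinuousOn ξ (Icc 0 1) ∧ InjOn ξ (Icc 0 1) ∧ ξ '' Icc 0 1 = A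

/-- `a` is an endpoint of the simple arc `A`. -/
def IsArcEndpoint (a : ℂ) (A : Set ℂ) : Prop :=
  ∃ ξ : ℝ → ℂ, ContinuousOn ξ (Icc 0 1) ∧ InjOn ξ (Icc 0 1) ∧ ξ '' Icc 0 1 = A ∧ ξ 0 = a

/-- The quasi-arc inequality for a parametrization `ξ` with constant `C`. -/
def IsQuasiArcParam (C : ℝ) (ξ : ℝ → ℂ) : Prop :=
  ∀ x y z : ℝ, x ∈ Icc (0:ℝ) 1 → y ∈ Icc (0:ℝ) 1 → z ∈ Icc (0:ℝ) 1 → x ≤ y → y ≤ z →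
    C * ‖ξ x - ξ y‖ ≤ ‖ξ x - ξ z‖

/-- A quasi-arc: a simple arc such that every parametrization satisfies the
quasi-arc inequality with a uniform constant `C > 0`. -/
def IsQuasiArc (A : Set ℂ) : Prop :=
  IsSimpleArc A ∧ ∃ C : ℝ, 0 < C ∧ ∀ ξ : ℝ → ℂ,
    ContinuousOn ξ (Icc 0 1) → InjOn ξ (Icc 0 1) → ξ '' Icc 0 1 = A → IsQuasiArcParam C ξ

/-! Traverse `R` backwards from its far end to `a` and then `L` away from `a`: this parametrizes
`R ∪ L` with `a` at the parameter `1/2`. For `u ∈ R` and `v ∈ L` the quasi-arc inequality with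
`x ≤ 1/2 ≤ z` gives `C ‖u - a‖ ≤ ‖u - v‖`, that is `C ‖w‖ ≤ ‖w - 1‖` for
`w = (u - a) / (v - a)`, which is incompatible with `w → 1`. -/

section ArcJoin

variable {X : Type*} (f g : ℝ → X)

noncomputable def arcJoin (t : ℝ) : X := if t ≤ 1 / 2 then f (1 - 2 * t) else g (2 * t - 1)

variable {f g}

lemma arcJoin_of_le_half {t : ℝ} (ht : t ≤ 1 / 2) : arcJoin f g t = f (1 - 2 * t) :=
  if_pos ht

lemma arcJoin_of_half_le (hfg : f 0 = g 0) {t : ℝ} (ht : 1 / 2 ≤ t) :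
    arcJoin f g t = g (2 * t - 1) := by
  rcases ht.eq_or_lt with rfl | ht
  · norm_num [arcJoin, hfg]
  · exact if_neg (not_le.2 ht)

lemma arcJoin_half : arcJoin f g (1 / 2) = f 0 := by
  norm_num [arcJoin]

lemma mapsTo_one_sub_two_mul : MapsTo (fun t : ℝ ↦ 1 - 2 * t) (Icc 0 (1 / 2)) (Icc 0 1) :=
  fun _ ht ↦ ⟨by linarith [ht.2], by linarith [ht.1]⟩

lemma mapsTo_two_mul_sub_one : MapsTo (fun t : ℝ ↦ 2 * t - 1) (Icc (1 / 2) 1) (Icc 0 1) :=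
  fun _ ht ↦ ⟨by linarith [ht.1], by linarith [ht.2]⟩

lemma eqOn_arcJoin_left : EqOn (arcJoin f g) (f ∘ fun t ↦ 1 - 2 * t) (Icc 0 (1 / 2)) :=
  fun _ ht ↦ arcJoin_of_le_half ht.2

lemma eqOn_arcJoin_right (hfg : f 0 = g 0) :
    EqOn (arcJoin f g) (g ∘ fun t ↦ 2 * t - 1) (Icc (1 / 2) 1) :=
  fun _ ht ↦ arcJoin_of_half_le hfg ht.1

lemma image_arcJoin_Icc_left : arcJoin f g '' Icc 0 (1 / 2) = f '' Icc 0 1 := by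
  rw [eqOn_arcJoin_left.image_eq, image_comp]
  refine congrArg _ (mapsTo_one_sub_two_mul.image_subset.antisymm fun s hs ↦ ?_)
  exact ⟨(1 - s) / 2, ⟨by linarith [hs.2], by linarith [hs.1]⟩, by ring⟩

lemma image_arcJoin_Icc_right (hfg : f 0 = g 0) :
    arcJoin f g '' Icc (1 / 2) 1 = g '' Icc 0 1 := by
  rw [(eqOn_arcJoin_right hfg).image_eq, image_comp]
  refine congrArg _ (mapsTo_two_mul_sub_one.image_subset.antisymm fun s hs ↦ ?_)
  exact ⟨(s + 1) / 2, ⟨by linarith [hs.1], by linarith [hs.2]⟩, by ring⟩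

lemma Icc_zero_half_union_Icc_half_one : Icc (0 : ℝ) (1 / 2) ∪ Icc (1 / 2) 1 = Icc 0 1 :=
  Icc_union_Icc_eq_Icc (by norm_num) (by norm_num)

lemma image_arcJoin_Icc (hfg : f 0 = g 0) :
    arcJoin f g '' Icc 0 1 = f '' Icc 0 1 ∪ g '' Icc 0 1 := by
  conv_lhs => rw [← Icc_zero_half_union_Icc_half_one]
  rw [image_union, image_arcJoin_Icc_left, image_arcJoin_Icc_right hfg]

lemma continuousOn_arcJoin [TopologicalSpace X] (hf : ContinuousOn f (Icc 0 1))
    (hg : ContinuousOn g (Icc 0 1)) (hfg : f 0 = g 0) :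
    ContinuousOn (arcJoin f g) (Icc 0 1) := by
  rw [← Icc_zero_half_union_Icc_half_one]
  refine ContinuousOn.union_of_isClosed ?_ ?_ isClosed_Icc isClosed_Icc
  · exact (hf.comp (by fun_prop) mapsTo_one_sub_two_mul).congr eqOn_arcJoin_left
  · exact (hg.comp (by fun_prop) mapsTo_two_mul_sub_one).congr (eqOn_arcJoin_right hfg)

lemma injOn_arcJoin (hf : InjOn f (Icc 0 1)) (hg : InjOn g (Icc 0 1)) (hfg : f 0 = g 0)
    (hinter : f '' Icc 0 1 ∩ g '' Icc 0 1 = {f 0}) :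
    InjOn (arcJoin f g) (Icc 0 1) := by
  have hleft : InjOn (arcJoin f g) (Icc 0 (1 / 2)) :=
    (hf.comp (fun _ _ _ _ h ↦ by simpa using h) mapsTo_one_sub_two_mul).congr
      eqOn_arcJoin_left.symm
  have hright : InjOn (arcJoin f g) (Icc (1 / 2) 1) :=
    (hg.comp (fun _ _ _ _ h ↦ by simpa using h) mapsTo_two_mul_sub_one).congr
      (eqOn_arcJoin_right hfg).symm
  have hcross : ∀ s ∈ Icc (0 : ℝ) (1 / 2), ∀ t ∈ Icc (1 / 2 : ℝ) 1,
      arcJoin f g s = arcJoin f g t → s = t := by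
    intro s hs t ht hst
    have hmem : arcJoin f g s ∈ f '' Icc 0 1 ∩ g '' Icc 0 1 :=
      ⟨image_arcJoin_Icc_left ▸ mem_image_of_mem _ hs,
        hst ▸ image_arcJoin_Icc_right hfg ▸ mem_image_of_mem _ ht⟩
    rw [hinter, mem_singleton_iff] at hmem
    have hs0 : 1 - 2 * s = 0 := hf (mapsTo_one_sub_two_mul hs) (by simp)
      ((arcJoin_of_le_half hs.2).symm.trans hmem)
    have ht0 : 2 * t - 1 = 0 := hg (mapsTo_two_mul_sub_one ht) (by simp)
      (((arcJoin_of_half_le hfg ht.1).symm.trans (hst.symm.trans hmem)).trans hfg)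
    linarith
  rw [← Icc_zero_half_union_Icc_half_one]
  rintro s (hs | hs) t (ht | ht) hst
  · exact hleft hs ht hst
  · exact hcross s hs t ht hst
  · exact (hcross t ht s hs hst.symm).symm
  · exact hright hs ht hst

end ArcJoin

lemma IsQuasiArc.exists_mul_norm_sub_le {R L : Set ℂ} {a : ℂ} (hR : IsArcEndpoint a R)
    (hL : IsArcEndpoint a L) (hRL : R ∩ L = {a}) (hqa : IsQuasiArc (R ∪ L)) :
    ∃ C > 0, ∀ p ∈ R, ∀ q ∈ L, C * ‖p - a‖ ≤ ‖p - q‖ := by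
  obtain ⟨f, hfc, hfi, rfl, hf0⟩ := hR
  obtain ⟨g, hgc, hgi, rfl, hg0⟩ := hL
  obtain ⟨-, C, hC, hquasi⟩ := hqa
  have hfg : f 0 = g 0 := hf0.trans hg0.symm
  have hq := hquasi _ (continuousOn_arcJoin hfc hgc hfg)
    (injOn_arcJoin hfi hgi hfg (hf0 ▸ hRL)) (image_arcJoin_Icc hfg)
  refine ⟨C, hC, fun p hp q hq' ↦ ?_⟩
  rw [← image_arcJoin_Icc_left (g := g)] at hp
  rw [← image_arcJoin_Icc_right hfg] at hq'
  obtain ⟨x, hx, rfl⟩ := hp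
  obtain ⟨z, hz, rfl⟩ := hq'
  have hhalf : (1 / 2 : ℝ) ∈ Icc 0 1 := ⟨by norm_num, by norm_num⟩
  simpa only [arcJoin_half, hf0] using
    hq x (1 / 2) z ⟨hx.1, hx.2.trans hhalf.2⟩ hhalf ⟨hhalf.1.trans hz.1, hz.2⟩ hx.2 hz.1

lemma not_tendsto_div_one_of_mul_norm_le {𝕜 ι : Type*} [NormedField 𝕜] {l : Filter ι}
    [l.NeBot] {p q : ι → 𝕜} {C : ℝ} (hC : 0 < C) (hq : ∀ i, q i ≠ 0)
    (h : ∀ i, C * ‖p i‖ ≤ ‖p i - q i‖) : ¬ Tendsto (fun i ↦ p i / q i) l (𝓝 1) := by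
  intro hlim
  have hratio : ∀ i, C * ‖p i / q i‖ ≤ ‖p i / q i - 1‖ := fun i ↦ by
    rw [div_sub_one (hq i), norm_div, norm_div, ← mul_div_assoc]
    exact div_le_div_of_nonneg_right (h i) (norm_nonneg _)
  have hlhs : Tendsto (fun i ↦ C * ‖p i / q i‖) l (𝓝 C) := by
    simpa using hlim.norm.const_mul C
  have hrhs : Tendsto (fun i ↦ ‖p i / q i - 1‖) l (𝓝 0) := by
    simpa using (hlim.sub_const 1).norm
  linarith [le_of_tendsto_of_tendsto' hlhs hrhs hratio]

theorem transverse_of_quasiArc_general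
    (R L : Set ℂ) (a : ℂ)
    (hR : IsArcEndpoint a R) (hL : IsArcEndpoint a L)
    (hRL : R ∩ L = {a})
    (hqa : IsQuasiArc (R ∪ L))
    (u v : ℕ → ℂ)
    (hu : ∀ n, u n ∈ R \ {a}) (hv : ∀ n, v n ∈ L \ {a}) :
    ¬ Tendsto (fun n => (u n - a) / (v n - a)) atTop (𝓝 1) := by
  obtain ⟨C, hC, hsep⟩ := hqa.exists_mul_norm_sub_le hR hL hRL
  refine not_tendsto_div_one_of_mul_norm_le hC (fun n ↦ sub_ne_zero.2 (hv n).2) fun n ↦ ?_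
  rw [sub_sub_sub_cancel_right]
  exact hsep (u n) (hu n).1 (v n) (hv n).1

/-- if simple arcs `R`, `L` share an endpoint `a`, are otherwise disjoint,
and `R ∪ L` is a quasi-arc, then `R` and `L` are transverse at `a`. -/
theorem transverse_of_quasiArc
    (R L : Set ℂ) (a : ℂ)
    (hR : IsArcEndpoint a R) (hL : IsArcEndpoint a L)
    (hRL : R ∩ L = {a})
    (hqa : IsQuasiArc (R ∪ L))
    (u v : ℕ → ℂ)
    (hu : ∀ n, u n ∈ R \ {a}) (hv : ∀ n, v n ∈ L \ {a})
    (hua : Tendsto u atTop (𝓝 a)) (hva : Tendsto v atTop (𝓝 a)) :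
    ¬ Tendsto (fun n => (u n - a) / (v n - a)) atTop (𝓝 1) :=
  transverse_of_quasiArc_general R L a hR hL hRL hqa u v hu hv
end

section
/- Let R ⊂ ℂ be a simple arc with endpoint 0 whose image R' under w ↦ w^k (k > 1) is also a simple arc, and suppose λR' ⊇ R' for some λ ∈ ℂ with |λ| > 1. Then for every k-th root of unity ζ ≠ 1, the arcs R and ζR are transverse at 0: there are no sequences uₙ, vₙ in R with uₙ, vₙ → 0 and vₙ/uₙ → ζ. -/
open Set Filter Topology

/-!
Parametrize `R = ξ [0,1]` with `ξ 0 = 0` and let `q w = w ^ k`. Read through a parametrization of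
the arc `q R`, the map `q ∘ ξ` becomes a continuous real function on `[0,1]` that is locally
injective on `(0,1)`, where `q'` does not vanish; hence it is injective, and so is `q` on `R`. Then
`w ↦ q⁻¹(λ⁻¹ q w) / w` is continuous on the connected set `R \ {0}` with values among the finitely
many `k`-th roots of `λ⁻¹`, so it is a constant `μ`: `μ R ⊆ R` and `‖μ‖ < 1`. Consequently
`R \ {0} = ⋃ₙ μⁿ K` for a compact `K ∌ 0`, and `vₙ / uₙ = μ^(dₙ) bₙ / aₙ` with `aₙ, bₙ ∈ K`. Since
`‖vₙ / uₙ‖ → 1`, the exponents `dₙ` stay bounded, and compactness gives `ζ = v / u` with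
`u, v ∈ R \ {0}`. Now `v ^ k = ζ ^ k u ^ k = u ^ k`, so `v = u` and `ζ = 1`.
-/

open Function

theorem IsCompact.continuousOn_invFunOn {X Y : Type*} [TopologicalSpace X] [Nonempty X]
    [TopologicalSpace Y] [T2Space Y] {f : X → Y} {s : Set X} (hs : IsCompact s)
    (hf : ContinuousOn f s) (hinj : InjOn f s) : ContinuousOn (invFunOn f s) (f '' s) := by
  rw [continuousOn_iff_isClosed]
  intro C hC
  refine ⟨f '' (s ∩ C), ((hs.inter_right hC).image_of_continuousOn
    (hf.mono inter_subset_left)).isClosed, ?_⟩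
  ext y
  constructor
  · rintro ⟨hyC, x, hx, rfl⟩
    rw [mem_preimage, hinj.leftInvOn_invFunOn hx] at hyC
    exact ⟨⟨x, ⟨hx, hyC⟩, rfl⟩, x, hx, rfl⟩
  · rintro ⟨⟨x, ⟨hx, hxC⟩, rfl⟩, -⟩
    exact ⟨by rwa [mem_preimage, hinj.leftInvOn_invFunOn hx], x, hx, rfl⟩

theorem HasStrictDerivAt.exists_mem_nhds_injOn {𝕜 : Type*} [NontriviallyNormedField 𝕜]
    [CompleteSpace 𝕜] {f : 𝕜 → 𝕜} {f' a : 𝕜} (hf : HasStrictDerivAt f f' a) (hf' : f' ≠ 0) :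
    ∃ U ∈ 𝓝 a, InjOn f U :=
  ⟨_, hf.eventually_left_inverse hf', fun _ hx _ hy hxy => hx.symm.trans (hxy ▸ hy)⟩

theorem IsExtrOn.not_injOn_Icc {X Y : Type*} [ConditionallyCompleteLinearOrder X]
    [DenselyOrdered X] [TopologicalSpace X] [OrderTopology X] [LinearOrder Y]
    [TopologicalSpace Y] [OrderTopology Y] {f : X → Y} {a b c : X} (hc : c ∈ Ioo a b)
    (hf : ContinuousOn f (Icc a b)) (hext : IsExtrOn f (Icc a b) c) : ¬ InjOn f (Icc a b) := by
  intro hinj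
  have ha : a ∈ Icc a b := left_mem_Icc.2 (hc.1.trans hc.2).le
  have hb : b ∈ Icc a b := right_mem_Icc.2 (hc.1.trans hc.2).le
  have hc' : c ∈ Icc a b := Ioo_subset_Icc_self hc
  rcases hf.strictMonoOn_of_injOn_Icc' (hc.1.trans hc.2).le hinj with hmono | hanti
  · rcases hext with hmin | hmax
    · exact (hmono ha hc' hc.1).not_ge (hmin ha)
    · exact (hmono hc' hb hc.2).not_ge (hmax hb)
  · rcases hext with hmin | hmax
    · exact (hanti hc' hb hc.2).not_ge (hmin hb)
    · exact (hanti ha hc' hc.1).not_ge (hmax ha)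

theorem ContinuousOn.injOn_Icc_of_forall_exists_mem_nhds_injOn {X Y : Type*}
    [ConditionallyCompleteLinearOrder X] [DenselyOrdered X] [TopologicalSpace X]
    [OrderTopology X] [LinearOrder Y] [TopologicalSpace Y] [OrderTopology Y] {f : X → Y}
    {a b : X} (hf : ContinuousOn f (Icc a b)) (hloc : ∀ c ∈ Ioo a b, ∃ U ∈ 𝓝 c, InjOn f U) :
    InjOn f (Icc a b) := by
  suffices ∀ x ∈ Icc a b, ∀ y ∈ Icc a b, x < y → f x ≠ f y by
    intro x hx y hy hxy
    by_contra hne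
    rcases lt_or_gt_of_ne hne with hlt | hlt
    exacts [this x hx y hy hlt hxy, this y hy x hx hlt hxy.symm]
  intro x hx y hy hxy hfxy
  have hsub : Icc x y ⊆ Icc a b := Icc_subset_Icc hx.1 hy.2
  obtain ⟨c, hc, hext⟩ := exists_Ioo_extr_on_Icc hxy (hf.mono hsub) hfxy
  obtain ⟨U, hU, hinj⟩ := hloc c ⟨hx.1.trans_lt hc.1, hc.2.trans_le hy.2⟩
  obtain ⟨p, q, ⟨hpc, hcq⟩, hpq⟩ :=
    (mem_nhds_iff_exists_Ioo_subset' ⟨x, hc.1⟩ ⟨y, hc.2⟩).1 (inter_mem hU (Ioo_mem_nhds hc.1 hc.2))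
  obtain ⟨p', hpp', hp'c⟩ := exists_between hpc
  obtain ⟨q', hcq', hq'q⟩ := exists_between hcq
  have hIcc : Icc p' q' ⊆ U ∩ Ioo x y := (Icc_subset_Ioo hpp' hq'q).trans hpq
  exact (hext.on_subset fun z hz => Ioo_subset_Icc_self (hIcc hz).2).not_injOn_Icc
    ⟨hp'c, hcq'⟩ (hf.mono fun z hz => hsub (Ioo_subset_Icc_self (hIcc hz).2))
    (hinj.mono fun z hz => (hIcc hz).1)

theorem injOn_of_isSimpleArc_image {X : Type*} [TopologicalSpace X] {ξ : ℝ → X}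
    (hξc : ContinuousOn ξ (Icc 0 1)) (hξi : InjOn ξ (Icc 0 1)) {q : X → ℂ}
    (hq : ContinuousOn q (ξ '' Icc 0 1)) (hloc : ∀ c ∈ Ioo (0 : ℝ) 1, ∃ U ∈ 𝓝 (ξ c), InjOn q U)
    (harc : IsSimpleArc (q '' (ξ '' Icc 0 1))) : InjOn q (ξ '' Icc 0 1) := by
  obtain ⟨η, hηc, hηi, hη⟩ := harc
  have hθc : ContinuousOn (invFunOn η (Icc 0 1)) (q '' (ξ '' Icc 0 1)) :=
    hη ▸ isCompact_Icc.continuousOn_invFunOn hηc hηi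
  have hθi : InjOn (invFunOn η (Icc 0 1)) (q '' (ξ '' Icc 0 1)) :=
    hη ▸ LeftInvOn.injOn (surjOn_image η _).rightInvOn_invFunOn
  have hmaps : MapsTo (q ∘ ξ) (Icc 0 1) (q '' (ξ '' Icc 0 1)) :=
    fun x hx => mem_image_of_mem q (mem_image_of_mem ξ hx)
  refine InjOn.image_of_comp (InjOn.of_comp (g := invFunOn η (Icc 0 1)) ?_)
  refine (hθc.comp (hq.comp hξc (mapsTo_image ξ _)) hmaps).injOn_Icc_of_forall_exists_mem_nhds_injOn
    fun c hc => ?_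
  obtain ⟨U, hU, hqU⟩ := hloc c hc
  have hI : Icc (0 : ℝ) 1 ∈ 𝓝 c := Icc_mem_nhds hc.1 hc.2
  refine ⟨ξ ⁻¹' U ∩ Icc 0 1, inter_mem ((hξc.continuousAt hI).preimage_mem_nhds hU) hI, ?_⟩
  exact hθi.comp (hqU.comp (hξi.mono inter_subset_right) fun x hx => hx.1)
    (hmaps.mono_left inter_subset_right)

theorem injOn_pow_of_isSimpleArc_image {ξ : ℝ → ℂ} (hξc : ContinuousOn ξ (Icc 0 1))
    (hξi : InjOn ξ (Icc 0 1)) (hξ0 : ξ 0 = 0) {k : ℕ} (hk : k ≠ 0)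
    (harc : IsSimpleArc ((· ^ k) '' (ξ '' Icc 0 1))) : InjOn (· ^ k) (ξ '' Icc 0 1) := by
  refine injOn_of_isSimpleArc_image hξc hξi (continuous_pow k).continuousOn (fun c hc => ?_) harc
  have hξc0 : ξ c ≠ 0 := fun h =>
    hc.1.ne' (hξi (Ioo_subset_Icc_self hc) (left_mem_Icc.2 zero_le_one) (h.trans hξ0.symm))
  exact (hasStrictDerivAt_pow k (ξ c)).exists_mem_nhds_injOn
    (mul_ne_zero (Nat.cast_ne_zero.2 hk) (pow_ne_zero _ hξc0))

theorem isPreconnected_image_Icc_sdiff_left {X : Type*} [TopologicalSpace X] {ξ : ℝ → X}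
    (hξc : ContinuousOn ξ (Icc 0 1)) (hξi : InjOn ξ (Icc 0 1)) :
    IsPreconnected (ξ '' Icc 0 1 \ {ξ 0}) := by
  rw [← image_singleton, ← hξi.image_sdiff_subset (by simp), Icc_sdiff_left]
  exact isPreconnected_Ioc.image ξ (hξc.mono Ioc_subset_Icc_self)

theorem exists_pow_eq_and_mapsTo_mul {𝕜 : Type*} [NormedField 𝕜] {k : ℕ} (hk : 0 < k)
    {R : Set 𝕜} (hR : IsCompact R) (hR₀ : IsPreconnected (R \ {0})) {w₁ : 𝕜}
    (hw₁ : w₁ ∈ R \ {0}) (hinj : InjOn (· ^ k) R) {c : 𝕜}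
    (hc : ∀ w ∈ R, c * w ^ k ∈ (· ^ k) '' R) : ∃ μ, μ ^ k = c ∧ MapsTo (μ * ·) R R := by
  set Q := invFunOn (· ^ k) R
  have hQc : ContinuousOn Q ((· ^ k) '' R) :=
    hR.continuousOn_invFunOn (continuous_pow k).continuousOn hinj
  set r : 𝕜 → 𝕜 := fun w => Q (c * w ^ k) / w
  have hr : ∀ w ∈ R \ {0}, r w ^ k = c := fun w hw => by
    rw [div_pow, invFunOn_eq (hc w hw.1), mul_div_assoc, div_self (pow_ne_zero k hw.2), mul_one]
  have hrc : ContinuousOn r (R \ {0}) :=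
    (hQc.comp (by fun_prop) fun w hw => hc w hw.1).div continuousOn_id fun w hw => hw.2
  have hconst : (r '' (R \ {0})).Subsingleton := by
    classical
    refine not_nontrivial_iff.1 fun h => (hR₀.image r hrc).infinite_of_nontrivial h ?_
    refine (Polynomial.nthRoots k c).toFinset.finite_toSet.subset ?_
    rintro _ ⟨w, hw, rfl⟩
    simp [Polynomial.mem_nthRoots hk, hr w hw]
  refine ⟨r w₁, hr w₁ hw₁, fun w hw => ?_⟩
  rcases eq_or_ne w 0 with rfl | hw0
  · simpa using hw
  · rw [← hconst (mem_image_of_mem r ⟨hw, hw0⟩) (mem_image_of_mem r hw₁)]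
    simpa only [r, div_mul_cancel₀ _ hw0] using invFunOn_mem (hc w hw)

theorem exists_image_Icc_subset_image_of_mapsTo {X : Type*} [TopologicalSpace X] [T2Space X]
    {ξ : ℝ → X} (hξc : ContinuousOn ξ (Icc 0 1)) (hξi : InjOn ξ (Icc 0 1)) {φ : X → X}
    (hφc : ContinuousOn φ (ξ '' Icc 0 1)) (hφ : MapsTo φ (ξ '' Icc 0 1) (ξ '' Icc 0 1))
    (hφ0 : φ (ξ 0) = ξ 0) (hφ1 : φ (ξ 1) ≠ ξ 0) :
    ∃ c ∈ Ioc (0 : ℝ) 1, ξ '' Icc 0 c ⊆ φ '' (ξ '' Icc 0 1) := by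
  set G := invFunOn ξ (Icc 0 1) ∘ φ ∘ ξ
  have hGc : ContinuousOn G (Icc 0 1) :=
    (isCompact_Icc.continuousOn_invFunOn hξc hξi).comp (hφc.comp hξc (mapsTo_image ξ _))
      (hφ.comp (mapsTo_image ξ _))
  have hGI : MapsTo G (Icc 0 1) (Icc 0 1) :=
    (surjOn_image ξ _).mapsTo_invFunOn.comp (hφ.comp (mapsTo_image ξ _))
  have hξG : ∀ x ∈ Icc (0 : ℝ) 1, ξ (G x) = φ (ξ x) := fun x hx =>
    (surjOn_image ξ _).rightInvOn_invFunOn (hφ (mem_image_of_mem ξ hx))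
  have h0 : (0 : ℝ) ∈ Icc 0 1 := left_mem_Icc.2 zero_le_one
  have h1 : (1 : ℝ) ∈ Icc 0 1 := right_mem_Icc.2 zero_le_one
  have hG0 : G 0 = 0 := by
    simp only [G, comp_apply, hφ0]
    exact hξi.leftInvOn_invFunOn h0
  have hG1 : G 1 ≠ 0 := fun h => hφ1 (by rw [← hξG 1 h1, h])
  refine ⟨G 1, ⟨(hGI h1).1.lt_of_ne' hG1, (hGI h1).2⟩, ?_⟩
  rintro _ ⟨x, hx, rfl⟩
  obtain ⟨y, hy, rfl⟩ := intermediate_value_Icc zero_le_one hGc (by rwa [hG0])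
  exact ⟨ξ y, mem_image_of_mem ξ hy, (hξG y hy).symm⟩

theorem exists_eq_pow_mul_of_subset_union {𝕜 : Type*} [NormedField 𝕜] {R K : Set 𝕜} {μ : 𝕜}
    (hR : Bornology.IsBounded R) (hμ : ‖μ‖ < 1) (hcover : R ⊆ K ∪ (μ * ·) '' R) {w : 𝕜}
    (hw : w ∈ R) (hw0 : w ≠ 0) : ∃ n : ℕ, ∃ a ∈ K, w = μ ^ n * a := by
  obtain ⟨M, hM⟩ := hR.exists_norm_le
  suffices h : ∀ n : ℕ, ∀ w ∈ R, ‖μ‖ ^ n * M < ‖w‖ → ∃ n : ℕ, ∃ a ∈ K, w = μ ^ n * a by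
    have hlim : Tendsto (fun n : ℕ => ‖μ‖ ^ n * M) atTop (𝓝 0) := by
      simpa using (tendsto_pow_atTop_nhds_zero_of_lt_one (norm_nonneg μ) hμ).mul_const M
    obtain ⟨n, hn⟩ := (hlim.eventually (gt_mem_nhds (norm_pos_iff.2 hw0))).exists
    exact h n w hw hn
  intro n
  induction n with
  | zero => exact fun w hw hlt => absurd (hM w hw) (by simpa using hlt)
  | succ n ih =>
    intro w hw hlt
    rcases hcover hw with hwK | ⟨w', hw', rfl⟩
    · exact ⟨0, w, hwK, by simp⟩
    · have : ‖μ‖ ^ n * M < ‖w'‖ := by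
        rw [norm_mul, pow_succ', mul_assoc] at hlt
        exact lt_of_mul_lt_mul_left hlt (norm_nonneg μ)
      obtain ⟨m, a, ha, rfl⟩ := ih w' hw' this
      exact ⟨m + 1, a, ha, by ring⟩

theorem exists_isCompact_forall_eq_pow_mul {𝕜 : Type*} [NormedField 𝕜] {ξ : ℝ → 𝕜}
    (hξc : ContinuousOn ξ (Icc 0 1)) (hξi : InjOn ξ (Icc 0 1)) (hξ0 : ξ 0 = 0) {μ : 𝕜}
    (hμ0 : μ ≠ 0) (hμ : ‖μ‖ < 1) (hμR : MapsTo (μ * ·) (ξ '' Icc 0 1) (ξ '' Icc 0 1)) :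
    ∃ K ⊆ ξ '' Icc 0 1, IsCompact K ∧ (0 : 𝕜) ∉ K ∧
      ∀ w ∈ ξ '' Icc 0 1, w ≠ 0 → ∃ n : ℕ, ∃ a ∈ K, w = μ ^ n * a := by
  have hξ1 : ξ 1 ≠ 0 := fun h =>
    one_ne_zero (hξi (right_mem_Icc.2 zero_le_one) (left_mem_Icc.2 zero_le_one) (h.trans hξ0.symm))
  obtain ⟨c, hc, hcsub⟩ := exists_image_Icc_subset_image_of_mapsTo hξc hξi
    (continuous_const_mul μ).continuousOn hμR (by rw [hξ0, mul_zero])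
    (by rw [hξ0]; exact mul_ne_zero hμ0 hξ1)
  have hcover : ξ '' Icc 0 1 ⊆ ξ '' Icc c 1 ∪ (μ * ·) '' (ξ '' Icc 0 1) := by
    rintro _ ⟨x, hx, rfl⟩
    rcases le_total c x with h | h
    exacts [Or.inl ⟨x, ⟨h, hx.2⟩, rfl⟩, Or.inr (hcsub ⟨x, ⟨hx.1, h⟩, rfl⟩)]
  refine ⟨ξ '' Icc c 1, image_mono (Icc_subset_Icc_left hc.1.le),
    isCompact_Icc.image_of_continuousOn (hξc.mono (Icc_subset_Icc_left hc.1.le)), ?_,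
    fun w hw hw0 => exists_eq_pow_mul_of_subset_union
      (isCompact_Icc.image_of_continuousOn hξc).isBounded hμ hcover hw hw0⟩
  rintro ⟨x, hx, hx0⟩
  exact (hc.1.trans_le hx.1).ne' (hξi ⟨hc.1.le.trans hx.1, hx.2⟩ (left_mem_Icc.2 zero_le_one)
    (hx0.trans hξ0.symm))

theorem exists_forall_mem_Icc_of_zpow_mem_Icc {r s t : ℝ} (hr0 : 0 < r) (hr1 : r < 1)
    (hs : 0 < s) : ∃ N : ℕ, ∀ m : ℤ, r ^ m ∈ Icc s t → m ∈ Icc (-N : ℤ) N := by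
  have ht : 0 < (max t 1)⁻¹ := inv_pos.2 (lt_max_of_lt_right one_pos)
  obtain ⟨N, hN⟩ := exists_pow_lt_of_lt_one (lt_min hs ht) hr1
  refine ⟨N, fun m hm => ⟨?_, ?_⟩⟩
  · by_contra! h
    have h' := zpow_lt_zpow_right_of_lt_one₀ hr0 hr1 h
    rw [zpow_neg, zpow_natCast] at h'
    have := (lt_inv_comm₀ (pow_pos hr0 N) (lt_max_of_lt_right one_pos)).1
      (hN.trans_le (min_le_right _ _))
    linarith [hm.2, le_max_left t 1]
  · by_contra! h
    have h' := zpow_lt_zpow_right_of_lt_one₀ hr0 hr1 h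
    rw [zpow_natCast] at h'
    linarith [hm.1, min_le_left s (max t 1)⁻¹]

theorem exists_eq_zpow_mul_div_of_tendsto {𝕜 : Type*} [NormedField 𝕜] {μ : 𝕜} (hμ0 : μ ≠ 0)
    (hμ : ‖μ‖ < 1) {K : Set 𝕜} (hK : IsCompact K) (hK0 : (0 : 𝕜) ∉ K) {d : ℕ → ℤ}
    {a b : ℕ → 𝕜} (ha : ∀ n, a n ∈ K) (hb : ∀ n, b n ∈ K) {ζ : 𝕜} (hζ : ζ ≠ 0)
    (hlim : Tendsto (fun n => μ ^ d n * (b n / a n)) atTop (𝓝 ζ)) :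
    ∃ e : ℤ, ∃ a ∈ K, ∃ b ∈ K, ζ = μ ^ e * (b / a) := by
  obtain ⟨M, hM⟩ := hK.isBounded.exists_norm_le
  obtain ⟨x₀, hx₀, hmin⟩ := hK.exists_isMinOn ⟨a 0, ha 0⟩ continuous_norm.continuousOn
  set ρ := ‖x₀‖
  have hρ : 0 < ρ := norm_pos_iff.2 (ne_of_mem_of_not_mem hx₀ hK0)
  have hρK : ∀ x ∈ K, ρ ≤ ‖x‖ := fun x hx => hmin hx
  have hM0 : 0 < M := hρ.trans_le ((hρK _ (ha 0)).trans (hM _ (ha 0)))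
  obtain ⟨N, hN⟩ := exists_forall_mem_Icc_of_zpow_mem_Icc (norm_pos_iff.2 hμ0) hμ
    (by positivity : 0 < ‖ζ‖ / 2 * ρ / M) (t := 2 * ‖ζ‖ * M / ρ)
  set C : Set (ℤ × 𝕜 × 𝕜) := Icc (-N : ℤ) N ×ˢ K ×ˢ K
  have hev : ∀ᶠ n in atTop, (d n, a n, b n) ∈ C := by
    have hnorm := hlim.norm
    filter_upwards [hnorm.eventually (lt_mem_nhds (half_lt_self (norm_pos_iff.2 hζ))),
      hnorm.eventually (gt_mem_nhds (lt_two_mul_self (norm_pos_iff.2 hζ)))] with n h₁ h₂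
    have ha0 : 0 < ‖a n‖ := hρ.trans_le (hρK _ (ha n))
    have hb0 : 0 < ‖b n‖ := hρ.trans_le (hρK _ (hb n))
    have hx : ‖μ‖ ^ d n = ‖μ ^ d n * (b n / a n)‖ * ‖a n‖ / ‖b n‖ := by
      rw [norm_mul, norm_div, norm_zpow]
      field_simp
    refine ⟨hN _ ⟨?_, ?_⟩, ha n, hb n⟩ <;> rw [hx]
    · gcongr
      exacts [hρK _ (ha n), hM _ (hb n)]
    · gcongr
      exacts [hM _ (ha n), hρK _ (hb n)]
  set f : ℤ × 𝕜 × 𝕜 → 𝕜 := fun p => μ ^ p.1 * (p.2.2 / p.2.1)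
  have hf : ContinuousOn f C :=
    (continuous_of_discreteTopology.comp continuous_fst).continuousOn.mul
      ((continuous_snd.comp continuous_snd).continuousOn.div
        (continuous_fst.comp continuous_snd).continuousOn
        fun p hp => ne_of_mem_of_not_mem hp.2.1 hK0)
  have hC : IsCompact C := (finite_Icc _ _).isCompact.prod (hK.prod hK)
  obtain ⟨⟨e, a₀, b₀⟩, ⟨-, ha₀, hb₀⟩, he⟩ := (hC.image_of_continuousOn hf).isClosed.mem_of_tendsto
    hlim (hev.mono fun n hn => mem_image_of_mem f hn)
  exact ⟨e, a₀, ha₀, b₀, hb₀, he.symm⟩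

theorem exists_eq_div_of_tendsto_div {𝕜 : Type*} [NormedField 𝕜] {R K : Set 𝕜} {μ : 𝕜}
    (hμ0 : μ ≠ 0) (hμ : ‖μ‖ < 1) (hμR : MapsTo (μ * ·) R R) (hK : IsCompact K) (hKR : K ⊆ R)
    (hK0 : (0 : 𝕜) ∉ K) (hdecomp : ∀ w ∈ R, w ≠ 0 → ∃ n : ℕ, ∃ a ∈ K, w = μ ^ n * a)
    {u v : ℕ → 𝕜} (hu : ∀ n, u n ∈ R \ {0}) (hv : ∀ n, v n ∈ R \ {0}) {ζ : 𝕜} (hζ : ζ ≠ 0)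
    (hlim : Tendsto (fun n => v n / u n) atTop (𝓝 ζ)) :
    ∃ u₀ ∈ R, ∃ v₀ ∈ R, u₀ ≠ 0 ∧ ζ = v₀ / u₀ := by
  choose m a ha hua using fun n => hdecomp (u n) (hu n).1 (hu n).2
  choose l b hb hvb using fun n => hdecomp (v n) (hv n).1 (hv n).2
  have hratio : ∀ n, v n / u n = μ ^ ((l n : ℤ) - m n) * (b n / a n) := fun n => by
    rw [hua n, hvb n, mul_div_mul_comm, zpow_sub₀ hμ0, zpow_natCast, zpow_natCast]
  obtain ⟨e, a₀, ha₀, b₀, hb₀, rfl⟩ :=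
    exists_eq_zpow_mul_div_of_tendsto hμ0 hμ hK hK0 ha hb hζ (by simpa only [hratio] using hlim)
  have hpow : ∀ n : ℕ, MapsTo (μ ^ n * ·) R R := fun n => mul_left_iterate μ n ▸ hμR.iterate n
  have ha₀0 : a₀ ≠ 0 := ne_of_mem_of_not_mem ha₀ hK0
  obtain ⟨n, rfl | rfl⟩ := Int.eq_nat_or_neg e
  · exact ⟨a₀, hKR ha₀, μ ^ n * b₀, hpow n (hKR hb₀), ha₀0, by rw [zpow_natCast, mul_div_assoc]⟩
  · refine ⟨μ ^ n * a₀, hpow n (hKR ha₀), b₀, hKR hb₀, mul_ne_zero (pow_ne_zero n hμ0) ha₀0, ?_⟩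
    rw [zpow_neg, zpow_natCast, div_mul_eq_div_div_swap, inv_mul_eq_div]

/-- if `R` is a simple arc with endpoint `0`, whose image `R'` under
`w ↦ w^k` (`k > 1`) is a simple arc with `λ R' ⊇ R'` for some `|λ| > 1`, then for every
`k`-th root of unity `ζ ≠ 1` the arcs `R` and `ζ R` are transverse at `0`: there are no
sequences `uₙ, vₙ ∈ R \ {0}` tending to `0` with `vₙ/uₙ → ζ`. -/
theorem transverse_of_pullback_ray
    (k : ℕ) (hk : 1 < k) (R : Set ℂ)
    (hR : IsArcEndpoint 0 R)
    (hR' : IsSimpleArc ((fun w => w ^ k) '' R))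
    (lam : ℂ) (hlam : 1 < ‖lam‖)
    (hinv : (fun w => w ^ k) '' R ⊆ (fun z => lam * z) '' ((fun w => w ^ k) '' R))
    (ζ : ℂ) (hζ : ζ ^ k = 1) (hζ1 : ζ ≠ 1) :
    ¬ ∃ u v : ℕ → ℂ, (∀ n, u n ∈ R \ {0}) ∧ (∀ n, v n ∈ R \ {0}) ∧
      Tendsto u atTop (𝓝 0) ∧ Tendsto v atTop (𝓝 0) ∧
      Tendsto (fun n => v n / u n) atTop (𝓝 ζ) := by
  rintro ⟨u, v, hu, hv, -, -, hlim⟩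
  obtain ⟨ξ, hξc, hξi, rfl, hξ0⟩ := hR
  have hk0 : 0 < k := by omega
  have hlam0 : lam ≠ 0 := norm_pos_iff.1 (one_pos.trans hlam)
  have hinj := injOn_pow_of_isSimpleArc_image hξc hξi hξ0 hk0.ne' hR'
  have hξ1 : ξ 1 ∈ ξ '' Icc 0 1 \ {0} := ⟨mem_image_of_mem ξ (right_mem_Icc.2 zero_le_one),
    fun h => one_ne_zero (hξi (right_mem_Icc.2 zero_le_one) (left_mem_Icc.2 zero_le_one)
      (h.trans hξ0.symm))⟩
  obtain ⟨μ, hμk, hμR⟩ := exists_pow_eq_and_mapsTo_mul hk0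
    (isCompact_Icc.image_of_continuousOn hξc) (hξ0 ▸ isPreconnected_image_Icc_sdiff_left hξc hξi)
    hξ1 hinj (c := lam⁻¹) fun w hw => by
      obtain ⟨z, hz, hzw⟩ := hinv (mem_image_of_mem _ hw)
      rwa [← hzw, inv_mul_cancel_left₀ hlam0]
  have hμ0 : μ ≠ 0 := ne_zero_pow hk0.ne' (hμk ▸ inv_ne_zero hlam0)
  have hμ : ‖μ‖ < 1 := by
    rw [← pow_lt_one_iff_of_nonneg (norm_nonneg μ) hk0.ne', ← norm_pow, hμk, norm_inv]
    exact inv_lt_one_of_one_lt₀ hlam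
  obtain ⟨K, hKR, hK, hK0, hdecomp⟩ := exists_isCompact_forall_eq_pow_mul hξc hξi hξ0 hμ0 hμ hμR
  obtain ⟨u₀, hu₀, v₀, hv₀, hu₀0, hζuv⟩ := exists_eq_div_of_tendsto_div hμ0 hμ hμR hK hKR hK0
    hdecomp hu hv (ne_zero_pow hk0.ne' (hζ ▸ one_ne_zero)) hlim
  have hvu : v₀ = ζ * u₀ := by rw [hζuv, div_mul_cancel₀ _ hu₀0]
  have : v₀ = u₀ := hinj hv₀ hu₀ (by simp only [hvu, mul_pow, hζ, one_mul])
  exact hζ1 (by rw [hζuv, this, div_self hu₀0])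
end

section
/- Let k > 1 be an integer and suppose sequences of nonzero complex numbers uₙ, vₙ, wₙ satisfy: v̄ₙ := vₙ/uₙ → v̄ and w̄ₙ := wₙ/uₙ → w̄ in ℂ ∪ {∞}, |1 − v̄ₙ| ≤ |1 − w̄ₙ| for all n, δₙ := (1 − v̄ₙ)/(1 − w̄ₙ) → δ with |δ| ≤ 1, and Δₙ := (1 − v̄ₙ^k)/(1 − w̄ₙ^k) → ∞. Then v̄ and w̄ are finite, w̄ ≠ 1, and w̄ is a k-th root of unity different from 1. -/
open Filter Topology Finset

/-! Since `‖1 - v̄ₙ‖ ≤ ‖1 - w̄ₙ‖`, `v̄ₙ` is at most `‖w̄ₙ‖ + 2` in norm. If `w̄ₙ → ∞`, then `Δₙ` stays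
bounded (numerator and denominator both have size `‖w̄ₙ‖ᵏ`), so `w̄ₙ → W` and hence `v̄ₙ → V` are
finite. As the numerator of `Δₙ` converges, `Δₙ → ∞` forces `1 - w̄ₙᵏ → 0`, i.e. `Wᵏ = 1`. If `W = 1`
then also `V = 1`, and factoring `1 - xᵏ = (1 - x)(1 + ⋯ + xᵏ⁻¹)` gives
`‖Δₙ‖ ≤ ‖(1 + ⋯ + v̄ₙᵏ⁻¹)/(1 + ⋯ + w̄ₙᵏ⁻¹)‖ → ‖k / k‖ = 1`, a contradiction. -/

section NormedField

variable {𝕜 : Type*} [NormedField 𝕜]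

theorem norm_le_norm_add_two_of_norm_one_sub_le {a b : 𝕜} (h : ‖1 - a‖ ≤ ‖1 - b‖) :
    ‖a‖ ≤ ‖b‖ + 2 := by
  have ha := norm_sub_norm_le a 1
  have hb := norm_sub_le 1 b
  rw [norm_sub_rev, norm_one] at ha
  rw [norm_one] at hb
  linarith

theorem norm_one_sub_pow_div_le_of_two_le_norm {k : ℕ} (hk : k ≠ 0) {a b : 𝕜}
    (hb : 2 ≤ ‖b‖) (ha : ‖a‖ ≤ 2 * ‖b‖) :
    ‖(1 - a ^ k) / (1 - b ^ k)‖ ≤ 2 * (1 + 2 ^ k) := by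
  have hbk : 2 ≤ ‖b‖ ^ k := hb.trans (le_self_pow₀ (by linarith) hk)
  have hnum : ‖1 - a ^ k‖ ≤ (1 + 2 ^ k) * ‖b‖ ^ k :=
    calc ‖1 - a ^ k‖ ≤ 1 + ‖a‖ ^ k := by simpa using norm_sub_le (1 : 𝕜) (a ^ k)
      _ ≤ 1 + (2 * ‖b‖) ^ k := by gcongr
      _ ≤ (1 + 2 ^ k) * ‖b‖ ^ k := by rw [mul_pow]; nlinarith
  have hden : ‖b‖ ^ k / 2 ≤ ‖1 - b ^ k‖ := by
    have := norm_sub_norm_le (b ^ k) 1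
    rw [norm_sub_rev, norm_pow, norm_one] at this
    linarith
  calc ‖(1 - a ^ k) / (1 - b ^ k)‖ = ‖1 - a ^ k‖ / ‖1 - b ^ k‖ := norm_div _ _
    _ ≤ (1 + 2 ^ k) * ‖b‖ ^ k / (‖b‖ ^ k / 2) := by gcongr
    _ = 2 * (1 + 2 ^ k) := by field_simp

theorem norm_one_sub_pow_div_le_norm_geom_sum_div {a b : 𝕜} (h : ‖1 - a‖ ≤ ‖1 - b‖) (k : ℕ) :
    ‖(1 - a ^ k) / (1 - b ^ k)‖ ≤ ‖(∑ i ∈ range k, a ^ i) / ∑ i ∈ range k, b ^ i‖ := by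
  rw [← mul_neg_geom_sum a, ← mul_neg_geom_sum b, mul_div_mul_comm, norm_mul]
  refine mul_le_of_le_one_left (norm_nonneg _) ?_
  rw [norm_div]
  exact div_le_one_of_le₀ h (norm_nonneg _)

variable {ι : Type*} {l : Filter ι}

theorem tendsto_zero_of_tendsto_norm_div_atTop {a b : ι → 𝕜} {A : 𝕜}
    (ha : Tendsto a l (𝓝 A)) (h : Tendsto (fun i => ‖a i / b i‖) l atTop) :
    Tendsto b l (𝓝 0) := by
  have hinv : Tendsto (fun i => (a i / b i)⁻¹) l (𝓝 0) := by
    rw [tendsto_zero_iff_norm_tendsto_zero]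
    simp only [norm_inv]
    exact h.inv_tendsto_atTop
  have heq : (fun i => a i * (a i / b i)⁻¹) =ᶠ[l] b := by
    filter_upwards [h.eventually_gt_atTop 0] with i hi
    have : a i ≠ 0 := by rintro h0; simp [h0] at hi
    rw [inv_div, mul_div_cancel₀ _ this]
  simpa using (ha.mul hinv).congr' heq

variable {v w : ι → 𝕜} {k : ℕ}

theorem tendsto_norm_atTop_of_norm_one_sub_le (hle : ∀ i, ‖1 - v i‖ ≤ ‖1 - w i‖)
    (hv : Tendsto (fun i => ‖v i‖) l atTop) : Tendsto (fun i => ‖w i‖) l atTop := by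
  refine tendsto_atTop_mono (fun i => ?_) (tendsto_atTop_add_const_right _ (-2) hv)
  linarith [norm_le_norm_add_two_of_norm_one_sub_le (hle i)]

theorem not_tendsto_norm_atTop_of_norm_one_sub_le [l.NeBot] (hk : k ≠ 0)
    (hle : ∀ i, ‖1 - v i‖ ≤ ‖1 - w i‖)
    (hΔ : Tendsto (fun i => ‖(1 - v i ^ k) / (1 - w i ^ k)‖) l atTop) :
    ¬ Tendsto (fun i => ‖w i‖) l atTop := by
  intro hw
  have hbounded : ∀ᶠ i in l, ‖(1 - v i ^ k) / (1 - w i ^ k)‖ ≤ 2 * (1 + 2 ^ k) := by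
    filter_upwards [hw.eventually_ge_atTop 2] with i hi
    refine norm_one_sub_pow_div_le_of_two_le_norm hk hi ?_
    linarith [norm_le_norm_add_two_of_norm_one_sub_le (hle i)]
  obtain ⟨i, hgt, hbound⟩ := ((hΔ.eventually_gt_atTop _).and hbounded).exists
  exact hgt.not_ge hbound

theorem pow_eq_one_of_tendsto_norm_div_atTop [l.NeBot] {V W : 𝕜} (hv : Tendsto v l (𝓝 V))
    (hw : Tendsto w l (𝓝 W))
    (hΔ : Tendsto (fun i => ‖(1 - v i ^ k) / (1 - w i ^ k)‖) l atTop) : W ^ k = 1 := by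
  have hden : Tendsto (fun i => 1 - w i ^ k) l (𝓝 0) :=
    tendsto_zero_of_tendsto_norm_div_atTop (tendsto_const_nhds.sub (hv.pow k)) hΔ
  exact (sub_eq_zero.mp (tendsto_nhds_unique (tendsto_const_nhds.sub (hw.pow k)) hden)).symm

theorem ne_one_of_tendsto_norm_div_atTop [CharZero 𝕜] [l.NeBot] {W : 𝕜} (hk : k ≠ 0)
    (hle : ∀ i, ‖1 - v i‖ ≤ ‖1 - w i‖) (hw : Tendsto w l (𝓝 W))
    (hΔ : Tendsto (fun i => ‖(1 - v i ^ k) / (1 - w i ^ k)‖) l atTop) : W ≠ 1 := by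
  rintro rfl
  have hv : Tendsto v l (𝓝 1) := by
    have hw' : Tendsto (fun i => ‖1 - w i‖) l (𝓝 0) := by
      simpa using (tendsto_const_nhds (x := (1 : 𝕜)).sub hw).norm
    have : Tendsto (fun i => 1 - v i) l (𝓝 0) :=
      tendsto_zero_iff_norm_tendsto_zero.mpr (squeeze_zero (fun _ => norm_nonneg _) hle hw')
    simpa using (tendsto_const_nhds (x := (1 : 𝕜))).sub this
  have geom_sum_tendsto {x : ι → 𝕜} (hx : Tendsto x l (𝓝 1)) :
      Tendsto (fun i => ∑ j ∈ range k, x i ^ j) l (𝓝 k) := by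
    simpa using tendsto_finsetSum (range k) fun j _ => hx.pow j
  have hratio : Tendsto (fun i => ‖(∑ j ∈ range k, v i ^ j) / ∑ j ∈ range k, w i ^ j‖) l (𝓝 1) := by
    simpa [hk] using ((geom_sum_tendsto hv).div (geom_sum_tendsto hw) (by simpa using hk)).norm
  exact not_tendsto_atTop_of_tendsto_nhds hratio
    (tendsto_atTop_mono (fun i => norm_one_sub_pow_div_le_norm_geom_sum_div (hle i) k) hΔ)

end NormedField

theorem limit_is_root_of_unity_general
    (k : ℕ) (hk : 1 < k)
    (vb wb : ℕ → ℂ)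
    (hle : ∀ n, ‖1 - vb n‖ ≤ ‖1 - wb n‖)
    (hvlim : (∃ V : ℂ, Tendsto vb atTop (𝓝 V)) ∨
      Tendsto (fun n => ‖vb n‖) atTop atTop)
    (hwlim : (∃ W : ℂ, Tendsto wb atTop (𝓝 W)) ∨
      Tendsto (fun n => ‖wb n‖) atTop atTop)
    (hΔ : Tendsto (fun n => ‖(1 - vb n ^ k) / (1 - wb n ^ k)‖) atTop atTop) :
    ∃ V W : ℂ, Tendsto vb atTop (𝓝 V) ∧ Tendsto wb atTop (𝓝 W) ∧
      W ≠ 1 ∧ W ^ k = 1 := by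
  have hk0 : k ≠ 0 := by omega
  have hw_finite := not_tendsto_norm_atTop_of_norm_one_sub_le hk0 hle hΔ
  obtain ⟨W, hW⟩ := hwlim.resolve_right hw_finite
  obtain ⟨V, hV⟩ :=
    hvlim.resolve_right fun hv => hw_finite (tendsto_norm_atTop_of_norm_one_sub_le hle hv)
  exact ⟨V, W, hV, hW, ne_one_of_tendsto_norm_div_atTop hk0 hle hW hΔ,
    pow_eq_one_of_tendsto_norm_div_atTop hV hW hΔ⟩

/-- let `k > 1` and `uₙ, vₙ, wₙ` be nonzero complex sequences with
`v̄ₙ = vₙ/uₙ` and `w̄ₙ = wₙ/uₙ` converging in `ℂ ∪ {∞}`, `|1 − v̄ₙ| ≤ |1 − w̄ₙ|`,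
`δₙ = (1 − v̄ₙ)/(1 − w̄ₙ) → δ` with `|δ| ≤ 1`, and `Δₙ = (1 − v̄ₙ^k)/(1 − w̄ₙ^k) → ∞`.
Then `v̄` and `w̄` are finite and `w̄` is a `k`-th root of unity different from `1`. -/
theorem limit_is_root_of_unity
    (k : ℕ) (hk : 1 < k) (u v w : ℕ → ℂ)
    (hu : ∀ n, u n ≠ 0) (hv : ∀ n, v n ≠ 0) (hw : ∀ n, w n ≠ 0)
    (vb wb : ℕ → ℂ)
    (hvb : vb = fun n => v n / u n) (hwb : wb = fun n => w n / u n)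
    (hwb1 : ∀ n, wb n ≠ 1) (hwbk : ∀ n, wb n ^ k ≠ 1)
    (hle : ∀ n, ‖1 - vb n‖ ≤ ‖1 - wb n‖)
    (hvlim : (∃ V : ℂ, Tendsto vb atTop (𝓝 V)) ∨
      Tendsto (fun n => ‖vb n‖) atTop atTop)
    (hwlim : (∃ W : ℂ, Tendsto wb atTop (𝓝 W)) ∨
      Tendsto (fun n => ‖wb n‖) atTop atTop)
    (δ : ℂ) (hδ : Tendsto (fun n => (1 - vb n) / (1 - wb n)) atTop (𝓝 δ))
    (hδ1 : ‖δ‖ ≤ 1)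
    (hΔ : Tendsto (fun n => ‖(1 - vb n ^ k) / (1 - wb n ^ k)‖) atTop atTop) :
    ∃ V W : ℂ, Tendsto vb atTop (𝓝 V) ∧ Tendsto wb atTop (𝓝 W) ∧
      W ≠ 1 ∧ W ^ k = 1 :=
  limit_is_root_of_unity_general k hk vb wb hle hvlim hwlim hΔ
end

section
/- A quasi-symmetric embedding maps quasi-arcs to quasi-arcs: if f : X → ℂ is η-quasi-symmetric and A ⊂ X is a simple arc whose image f(A) in ℂ can be parametrized, and A is a quasi-arc in ℂ (with X ⊂ ℂ), then f(A) is a quasi-arc. -/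
open Set

/-- `f` is quasi-symmetric on `S`: there is an increasing homeomorphism
`η : [0,∞) → [0,∞)` controlling ratios of distances for sufficiently close triples. -/
def QuasiSymmetricOn (f : ℂ → ℂ) (S : Set ℂ) : Prop :=
  ∃ η : ℝ → ℝ, StrictMonoOn η (Ici 0) ∧ ContinuousOn η (Ici 0) ∧ η 0 = 0 ∧
    SurjOn η (Ici 0) (Ici 0) ∧
    ∃ ε > 0, ∀ x ∈ S, ∀ y ∈ S, ∀ z ∈ S, x ≠ y → x ≠ z → y ≠ z →
      dist x y < ε → dist x z < ε → dist y z < ε →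
      dist (f x) (f y) ≤ η (dist x y / dist x z) * dist (f x) (f z)

/-!
Fix a parametrization `ξ` of `A` with quasi-arc constant `C` and put `F = f ∘ ξ`. For triples
`x ≤ y ≤ z` with `z - x` small, uniform continuity of `ξ` puts `ξ x, ξ y, ξ z` in the range
where quasi-symmetry applies, and `|ξ x - ξ y| ≤ |ξ x - ξ z| / C` gives
`|F x - F y| ≤ η (1 / C) |F x - F z|`. For `z - x ≥ δ`, compactness of `[0,1]` bounds
`|F x - F z|` below and `|F x - F y|` above. Any other parametrization of `f(A)` is `F ∘ φ` with
`φ` a monotone homeomorphism of `[0,1]`, and the triangle inequality handles decreasing `φ`.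
-/

open Metric Topology

theorem exists_reparametrization {α : Type*} [TopologicalSpace α] [T2Space α] {ξ ζ : ℝ → α}
    (hξc : ContinuousOn ξ (Icc 0 1)) (hξi : InjOn ξ (Icc 0 1))
    (hζc : ContinuousOn ζ (Icc 0 1)) (hζi : InjOn ζ (Icc 0 1))
    (hsub : ζ '' Icc 0 1 ⊆ ξ '' Icc 0 1) :
    ∃ φ : ℝ → ℝ, MapsTo φ (Icc 0 1) (Icc 0 1) ∧
      (StrictMonoOn φ (Icc 0 1) ∨ StrictAntiOn φ (Icc 0 1)) ∧ ∀ t ∈ Icc 0 1, ξ (φ t) = ζ t := by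
  have hemb : IsClosedEmbedding ((Icc 0 1).domRestrict ξ) :=
    (continuousOn_iff_continuous_domRestrict.mp hξc).isClosedEmbedding hξi.injective
  choose ψ hψI hψ using fun t : Icc (0:ℝ) 1 => hsub (mem_image_of_mem ζ t.2)
  have hψc : Continuous fun t => (⟨ψ t, hψI t⟩ : Icc (0:ℝ) 1) := by
    rw [hemb.isEmbedding.continuous_iff]
    convert continuousOn_iff_continuous_domRestrict.mp hζc using 1
    exact funext hψ
  set φ : ℝ → ℝ := fun t => ψ (projIcc 0 1 zero_le_one t)
  have hφ : ∀ t (ht : t ∈ Icc (0:ℝ) 1), φ t = ψ ⟨t, ht⟩ := fun t ht => by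
    simp only [φ, projIcc_of_mem _ ht]
  have hφξ : ∀ t ∈ Icc (0:ℝ) 1, ξ (φ t) = ζ t := fun t ht => by rw [hφ t ht, hψ]
  have hφc : ContinuousOn φ (Icc 0 1) :=
    (continuous_subtype_val.comp (hψc.comp continuous_projIcc)).continuousOn
  have hφi : InjOn φ (Icc 0 1) := fun a ha b hb h =>
    hζi ha hb (by rw [← hφξ a ha, ← hφξ b hb, h])
  exact ⟨φ, fun t ht => hφ t ht ▸ hψI _, hφc.strictMonoOn_of_injOn_Icc' zero_le_one hφi, hφξ⟩

theorem IsQuasiArcParam.reverse {C : ℝ} {F : ℝ → ℂ} (hF : IsQuasiArcParam C F) (hC : 0 < C)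
    {x y z : ℝ} (hx : x ∈ Icc (0:ℝ) 1) (hy : y ∈ Icc (0:ℝ) 1) (hz : z ∈ Icc (0:ℝ) 1)
    (hzy : z ≤ y) (hyx : y ≤ x) : C / (C + 1) * ‖F x - F y‖ ≤ ‖F x - F z‖ := by
  have hzyx := hF z y x hz hy hx hzy hyx
  have htri := norm_sub_le_norm_sub_add_norm_sub (F x) (F z) (F y)
  rw [norm_sub_rev (F z) (F x)] at hzyx
  rw [div_mul_eq_mul_div, div_le_iff₀ (by positivity)]
  nlinarith

theorem IsQuasiArcParam.of_reparametrization {C : ℝ} {F ζ : ℝ → ℂ} {φ : ℝ → ℝ}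
    (hF : IsQuasiArcParam C F) (hC : 0 < C) (hφ : MapsTo φ (Icc 0 1) (Icc 0 1))
    (hmono : MonotoneOn φ (Icc 0 1) ∨ AntitoneOn φ (Icc 0 1))
    (hζ : ∀ t ∈ Icc 0 1, F (φ t) = ζ t) : IsQuasiArcParam (C / (C + 1)) ζ := by
  intro x y z hx hy hz hxy hyz
  rw [← hζ x hx, ← hζ y hy, ← hζ z hz]
  rcases hmono with hmono | hanti
  · have hCC : C / (C + 1) ≤ C := div_le_self hC.le (by linarith)
    exact (mul_le_mul_of_nonneg_right hCC (norm_nonneg _)).trans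
      (hF _ _ _ (hφ hx) (hφ hy) (hφ hz) (hmono hx hy hxy) (hmono hy hz hyz))
  · exact hF.reverse hC (hφ hx) (hφ hy) (hφ hz) (hanti hy hz hyz) (hanti hx hy hxy)

section Compact

variable {α β : Type*} [PseudoMetricSpace α] [MetricSpace β] {s : Set α} {F : α → β} {δ : ℝ}

theorem IsCompact.exists_pos_le_dist_image_of_le_dist (hs : IsCompact s) (hFc : ContinuousOn F s)
    (hFi : InjOn F s) (hδ : 0 < δ) :
    ∃ m > 0, ∀ x ∈ s, ∀ z ∈ s, δ ≤ dist x z → m ≤ dist (F x) (F z) := by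
  have hT : IsCompact (s ×ˢ s ∩ {p | δ ≤ dist p.1 p.2}) :=
    (hs.prod hs).inter_right (isClosed_le continuous_const continuous_dist)
  have hg : ContinuousOn (fun p : α × α => dist (F p.1) (F p.2)) (s ×ˢ s ∩ {p | δ ≤ dist p.1 p.2}) :=
    continuous_dist.comp_continuousOn ((hFc.comp continuousOn_fst fun p hp => hp.1.1).prodMk
      (hFc.comp continuousOn_snd fun p hp => hp.1.2))
  obtain ⟨m, hm, hle⟩ := hT.exists_forall_le' hg (a := 0) fun p ⟨⟨h1, h2⟩, hp⟩ =>
    dist_pos.2 (hFi.ne h1 h2 fun h => (hδ.trans_le hp).ne' (h ▸ dist_self _))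
  exact ⟨m, hm, fun x hx z hz h => hle (x, z) ⟨⟨hx, hz⟩, h⟩⟩

theorem IsCompact.exists_pos_mul_dist_image_le_of_le_dist (hs : IsCompact s)
    (hFc : ContinuousOn F s) (hFi : InjOn F s) (hδ : 0 < δ) :
    ∃ K > 0, ∀ x ∈ s, ∀ y ∈ s, ∀ z ∈ s, δ ≤ dist x z →
      K * dist (F x) (F y) ≤ dist (F x) (F z) := by
  obtain ⟨m, hm, hsep⟩ := hs.exists_pos_le_dist_image_of_le_dist hFc hFi hδ
  set D := diam (F '' s)
  have hD : 0 ≤ D := diam_nonneg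
  have hbdd : Bornology.IsBounded (F '' s) := (hs.image_of_continuousOn hFc).isBounded
  refine ⟨m / (D + 1), by positivity, fun x hx y hy z hz hxz => ?_⟩
  have hxy : dist (F x) (F y) ≤ D :=
    dist_le_diam_of_mem hbdd (mem_image_of_mem F hx) (mem_image_of_mem F hy)
  calc m / (D + 1) * dist (F x) (F y) ≤ m / (D + 1) * D := by gcongr
    _ ≤ m := by rw [div_mul_eq_mul_div, div_le_iff₀ (by positivity)]; nlinarith
    _ ≤ dist (F x) (F z) := hsep x hx z hz hxz

end Compact

theorem QuasiSymmetricOn.exists_dist_le_mul {f : ℂ → ℂ} {S : Set ℂ} (hf : QuasiSymmetricOn f S)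
    {C : ℝ} (hC : 0 < C) :
    ∃ K ≥ 1, ∃ ε > 0, ∀ a ∈ S, ∀ b ∈ S, ∀ c ∈ S, dist a b < ε → dist a c < ε → dist b c < ε →
      C * dist a b ≤ dist a c → dist (f a) (f b) ≤ K * dist (f a) (f c) := by
  obtain ⟨η, hηm, -, -, -, ε, hε, hη⟩ := hf
  refine ⟨max (η C⁻¹) 1, le_max_right _ _, ε, hε, fun a ha b hb c hc hab hac hbc hCabc => ?_⟩
  rcases eq_or_ne a b with rfl | hab'
  · simp only [dist_self]
    exact mul_nonneg (zero_le_one.trans (le_max_right _ _)) dist_nonneg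
  rcases eq_or_ne b c with rfl | hbc'
  · exact le_mul_of_one_le_left dist_nonneg (le_max_right _ _)
  have hac' : 0 < dist a c := (mul_pos hC (dist_pos.2 hab')).trans_le hCabc
  have hratio : dist a b / dist a c ≤ C⁻¹ := by
    rw [div_le_iff₀ hac', inv_mul_eq_div, le_div_iff₀ hC]
    linarith
  calc dist (f a) (f b) ≤ η (dist a b / dist a c) * dist (f a) (f c) :=
        hη a ha b hb c hc hab' (dist_pos.1 hac') hbc' hab hac hbc
    _ ≤ max (η C⁻¹) 1 * dist (f a) (f c) := by
        gcongr
        exact (hηm.monotoneOn (mem_Ici.2 (by positivity)) (mem_Ici.2 (by positivity)) hratio).trans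
          (le_max_left _ _)

theorem IsQuasiArcParam.exists_comp_of_quasiSymmetricOn {X : Set ℂ} {f : ℂ → ℂ} {ξ : ℝ → ℂ}
    {C : ℝ} (hξ : IsQuasiArcParam C ξ) (hC : 0 < C) (hqs : QuasiSymmetricOn f X)
    (hξc : ContinuousOn ξ (Icc 0 1)) (hξX : MapsTo ξ (Icc 0 1) X)
    (hFc : ContinuousOn (f ∘ ξ) (Icc 0 1)) (hFi : InjOn (f ∘ ξ) (Icc 0 1)) :
    ∃ K > 0, IsQuasiArcParam K (f ∘ ξ) := by
  obtain ⟨K₁, hK₁, ε, hε, hqsK⟩ := hqs.exists_dist_le_mul hC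
  obtain ⟨δ, hδ, hξε⟩ := Metric.uniformContinuousOn_iff.mp
    (isCompact_Icc.uniformContinuousOn_of_continuous hξc) ε hε
  obtain ⟨K₂, hK₂, hfar⟩ := isCompact_Icc.exists_pos_mul_dist_image_le_of_le_dist hFc hFi hδ
  have hK₁' : 0 < K₁⁻¹ := by positivity
  refine ⟨min K₁⁻¹ K₂, lt_min hK₁' hK₂, fun x y z hx hy hz hxy hyz => ?_⟩
  simp only [← dist_eq_norm, Function.comp_apply] at hfar ⊢
  rcases le_or_gt δ (z - x) with hxz | hxz
  · refine (mul_le_mul_of_nonneg_right (min_le_right _ _) dist_nonneg).trans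
      (hfar x hx y hy z hz ?_)
    rwa [Real.dist_eq, abs_sub_comm, abs_of_nonneg (by linarith)]
  have hnear : ∀ a ∈ Icc x z, ∀ b ∈ Icc x z, dist a b < δ := fun a ha b hb => by
    rw [Real.dist_eq, abs_sub_lt_iff]
    constructor <;> linarith [ha.1, ha.2, hb.1, hb.2]
  have hxI : x ∈ Icc x z := ⟨le_rfl, hxy.trans hyz⟩
  have hyI : y ∈ Icc x z := ⟨hxy, hyz⟩
  have hzI : z ∈ Icc x z := ⟨hxy.trans hyz, le_rfl⟩
  have hquasi : C * dist (ξ x) (ξ y) ≤ dist (ξ x) (ξ z) := by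
    simpa only [dist_eq_norm] using hξ x y z hx hy hz hxy hyz
  have hFxyz : dist (f (ξ x)) (f (ξ y)) ≤ K₁ * dist (f (ξ x)) (f (ξ z)) :=
    hqsK _ (hξX hx) _ (hξX hy) _ (hξX hz) (hξε x hx y hy (hnear x hxI y hyI))
      (hξε x hx z hz (hnear x hxI z hzI)) (hξε y hy z hz (hnear y hyI z hzI)) hquasi
  calc min K₁⁻¹ K₂ * dist (f (ξ x)) (f (ξ y)) ≤ K₁⁻¹ * (K₁ * dist (f (ξ x)) (f (ξ z))) :=
        mul_le_mul (min_le_left _ _) hFxyz dist_nonneg hK₁'.le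
    _ = dist (f (ξ x)) (f (ξ z)) := by field_simp

theorem quasiArc_image_of_qs_general
    (X : Set ℂ) (f : ℂ → ℂ)
    (hqs : QuasiSymmetricOn f X) (hinj : InjOn f X) (hcont : ContinuousOn f X)
    (A : Set ℂ) (hA : A ⊆ X)
    (hqa : IsQuasiArc A) :
    IsQuasiArc (f '' A) := by
  obtain ⟨⟨ξ, hξc, hξi, rfl⟩, C, hC, hCξ⟩ := hqa
  have hξX : MapsTo ξ (Icc 0 1) X := fun t ht => hA (mem_image_of_mem ξ ht)
  have hFc : ContinuousOn (f ∘ ξ) (Icc 0 1) := hcont.comp hξc hξX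
  have hFi : InjOn (f ∘ ξ) (Icc 0 1) := hinj.comp hξi hξX
  obtain ⟨K, hK, hF⟩ :=
    (hCξ ξ hξc hξi rfl).exists_comp_of_quasiSymmetricOn hC hqs hξc hξX hFc hFi
  refine ⟨⟨f ∘ ξ, hFc, hFi, image_comp f ξ _⟩, K / (K + 1), by positivity,
    fun ζ hζc hζi hζim => ?_⟩
  obtain ⟨φ, hφ, hmono, hφζ⟩ :=
    exists_reparametrization hFc hFi hζc hζi (by rw [hζim, image_comp])
  exact hF.of_reparametrization hK hφ (hmono.imp StrictMonoOn.monotoneOn StrictAntiOn.antitoneOn)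
    hφζ

/-- a quasi-symmetric embedding maps quasi-arcs to quasi-arcs. -/
theorem quasiArc_image_of_qs
    (X : Set ℂ) (f : ℂ → ℂ)
    (hqs : QuasiSymmetricOn f X) (hinj : InjOn f X) (hcont : ContinuousOn f X)
    (A : Set ℂ) (hA : A ⊆ X)
    (hqa : IsQuasiArc A)
    (harc : IsSimpleArc (f '' A)) :
    IsQuasiArc (f '' A) :=
  quasiArc_image_of_qs_general X f hqs hinj hcont A hA hqa
end

section
/- Let P be a polynomial with connected filled Julia set K_P, let Zc be an admissible collection of cuts, and suppose P restricted to the avoiding set A_P(Zc) is injective and A_P(Zc) is connected with no non-repelling periodic points other than possibly the fixed root points of cuts in Zc (which are non-rotational repelling fixed points). If A_P(Zc) contains a critical point c of P, then c belongs to the set of root points of cuts in Zc. -/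
open Set Filter Topology

/-- A cut for the polynomial map `P` with filled Julia set `K`: two external rays
(simple curves in the complement of `K`) landing at a common root point of `K`,
together with the wedge it bounds (a connected component of the complement of the
cut; the empty set for a degenerate cut). -/
structure PolyCut (P : ℂ → ℂ) (K : Set ℂ) where
  root : ℂ
  rayR : ℝ → ℂ
  rayL : ℝ → ℂ
  wedge : Set ℂ
  root_mem : root ∈ K
  rayR_cont : ContinuousOn rayR (Set.Ioo 0 1)
  rayL_cont : ContinuousOn rayL (Set.Ioo 0 1)
  rayR_out : ∀ t ∈ Set.Ioo (0:ℝ) 1, rayR t ∉ K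
  rayL_out : ∀ t ∈ Set.Ioo (0:ℝ) 1, rayL t ∉ K
  rayR_land : Filter.Tendsto rayR (nhdsWithin 1 (Set.Iio 1)) (nhds root)
  rayL_land : Filter.Tendsto rayL (nhdsWithin 1 (Set.Iio 1)) (nhds root)
  wedge_comp : ∀ x ∈ wedge,
    wedge = connectedComponentIn ((rayR '' Set.Ioo 0 1 ∪ rayL '' Set.Ioo 0 1 ∪ {root})ᶜ) x

/-- The carrier of a cut: the two rays together with the root point. -/
def PolyCut.carrier {P : ℂ → ℂ} {K : Set ℂ} (Γ : PolyCut P K) : Set ℂ :=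
  Γ.rayR '' Set.Ioo 0 1 ∪ Γ.rayL '' Set.Ioo 0 1 ∪ {Γ.root}

/-- An admissible collection of cuts: finite, `P`-invariant, and all cuts lie in one
(principal) connected component of the complement of the union of the wedges. -/
def IsAdmissible (P : ℂ → ℂ) (K : Set ℂ) (Zc : Set (PolyCut P K)) : Prop :=
  Zc.Finite ∧
  (∀ Γ ∈ Zc, ∃ Γ' ∈ Zc, P Γ.root = Γ'.root ∧ P '' Γ.carrier = Γ'.carrier) ∧
  ∃ O : Set ℂ, (∀ x ∈ O, O = connectedComponentIn ((⋃ Γ ∈ Zc, Γ.wedge)ᶜ) x) ∧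
    ∀ Γ ∈ Zc, Γ.carrier ⊆ O

/-- The avoiding set `A_P(Zc)`: points of `K` whose forward orbit never enters
any wedge of `Zc`. -/
def avoidingSet (P : ℂ → ℂ) (K : Set ℂ) (Zc : Set (PolyCut P K)) : Set ℂ :=
  {x ∈ K | ∀ n : ℕ, P^[n] x ∉ ⋃ Γ ∈ Zc, Γ.wedge}

/-!
Near a critical point `c` of multiplicity `m - 1 ≥ 1`, `P(z) - P(c)` is the `m`-th power of a
local coordinate `φ` centred at `c`, so every `a ≠ c` close to `c` has a second preimage
`φ⁻¹(ζ φ(a))` of `P(a)` close to `c`, with `ζ ≠ 1` an `m`-th root of unity. If `c` lies in the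
connected set `A`, which is not `{c}` unless `c` is a superattracting fixed point, such points
`a ∈ A` accumulate at `c`. Their siblings lie in `K` and have their image in `A`, so by
injectivity of `P` on `A` they must lie in a wedge. Hence `c` is in the closure of a wedge;
as `c ∈ K` avoids the rays and the wedges themselves, it is a root point.
-/

theorem HasStrictDerivAt.eventually_exists_ne_pow_eq {φ : ℂ → ℂ} {w c : ℂ} {m : ℕ}
    (hφ : HasStrictDerivAt φ w c) (hw : w ≠ 0) (hφc : φ c = 0) (hm : 2 ≤ m)
    {U : Set ℂ} (hU : U ∈ 𝓝 c) :
    ∀ᶠ a in 𝓝[≠] c, ∃ b ∈ U, b ≠ a ∧ φ b ^ m = φ a ^ m := by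
  obtain ⟨ζ, hζm, hζ1⟩ : ∃ ζ : ℂ, ζ ^ m = 1 ∧ ζ ≠ 1 :=
    have hζ := Complex.isPrimitiveRoot_exp m (by omega)
    ⟨_, hζ.pow_eq_one, hζ.ne_one (by omega)⟩
  have hF := hφ.hasStrictFDerivAt_equiv hw
  obtain ⟨η, hηc, hη, hleft, hright⟩ : ∃ η : ℂ → ℂ, η 0 = c ∧ Tendsto η (𝓝 0) (𝓝 c) ∧
      (∀ᶠ z in 𝓝 c, η (φ z) = z) ∧ ∀ᶠ y in 𝓝 0, φ (η y) = y := by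
    have h0 : hF.localInverse φ _ c 0 = c := hφc ▸ hF.localInverse_apply_image
    refine ⟨_, h0, ?_, hF.eventually_left_inverse, hφc ▸ hF.eventually_right_inverse⟩
    simpa only [hφc, h0] using hF.localInverse_continuousAt.tendsto
  have hζφ : Tendsto (fun a => ζ * φ a) (𝓝 c) (𝓝 0) := by
    simpa only [hφc, mul_zero] using
      (HasStrictDerivAt.hasDerivAt hφ).continuousAt.tendsto.const_mul ζ
  filter_upwards [nhdsWithin_le_nhds ((hη.comp hζφ).eventually hU),
    nhdsWithin_le_nhds (hζφ.eventually hright), nhdsWithin_le_nhds hleft, self_mem_nhdsWithin]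
    with a hbU hφb hηa hac
  refine ⟨η (ζ * φ a), hbU, fun hba => hac (mem_singleton_iff.2 ?_), ?_⟩
  · have hφa : φ a = 0 := (mul_left_eq_self₀.1 (by rw [← hφb, hba])).resolve_left hζ1
    rw [← hηa, hφa, hηc]
  · rw [hφb, mul_pow, hζm, one_mul]

open Polynomial

theorem Polynomial.exists_hasStrictDerivAt_pow_rootMultiplicity_eq_eval {q : ℂ[X]} {c : ℂ}
    (hq : q ≠ 0) (hc : q.IsRoot c) :
    ∃ φ : ℂ → ℂ, ∃ w ≠ 0, HasStrictDerivAt φ w c ∧ φ c = 0 ∧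
      ∀ᶠ z in 𝓝 c, φ z ^ q.rootMultiplicity c = q.eval z := by
  set m := q.rootMultiplicity c
  have hm : (m : ℂ) ≠ 0 := Nat.cast_ne_zero.2 ((rootMultiplicity_pos hq).2 hc).ne'
  have exp_log_pow : ∀ u : ℂ, u ≠ 0 → Complex.exp (Complex.log u / m) ^ m = u := fun u hu => by
    rw [← Complex.exp_nat_mul, mul_div_cancel₀ _ hm, Complex.exp_log hu]
  set g := q /ₘ (X - C c) ^ m
  have hgc : g.eval c ≠ 0 := eval_divByMonic_pow_rootMultiplicity_ne_zero c hq
  set w := Complex.exp (Complex.log (g.eval c) / m)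
  -- dividing by `g c` keeps the argument of `log` near `1`, away from the branch cut
  set ψ : ℂ → ℂ := fun z => w * Complex.exp (Complex.log (g.eval z / g.eval c) / m)
  have hψc : ψ c = w := by simp [ψ, div_self hgc]
  obtain ⟨D, hψ⟩ : ∃ D, HasStrictDerivAt ψ D c := by
    have hlog := (Complex.hasStrictDerivAt_log (by simp [div_self hgc])).comp c
      ((g.hasStrictDerivAt c).div_const (g.eval c))
    exact ⟨_, ((Complex.hasStrictDerivAt_exp _).comp c (hlog.div_const (m : ℂ))).const_mul w⟩
  refine ⟨fun z => (z - c) * ψ z, w, Complex.exp_ne_zero _, ?_, by simp, ?_⟩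
  · have h : HasStrictDerivAt (fun z => (z - c) * ψ z) (1 * ψ c + (c - c) * D) c :=
      HasStrictDerivAt.mul ((hasStrictDerivAt_id c).sub_const c) hψ
    simpa [hψc] using h
  · filter_upwards [g.continuous.continuousAt.eventually_ne hgc] with z hz
    calc ((z - c) * ψ z) ^ m
        = (z - c) ^ m * (w ^ m * Complex.exp (Complex.log (g.eval z / g.eval c) / m) ^ m) := by
          simp only [ψ, mul_pow]
      _ = (z - c) ^ m * g.eval z := by
          rw [exp_log_pow _ hgc, exp_log_pow _ (div_ne_zero hz hgc), mul_div_cancel₀ _ hgc]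
      _ = ((X - C c) ^ m * g).eval z := by simp
      _ = q.eval z := congrArg (eval z) (pow_mul_divByMonic_rootMultiplicity_eq q c)

theorem Polynomial.eventually_exists_ne_eval_eq_of_derivative_eval_eq_zero {p : ℂ[X]} {c : ℂ}
    (hp : 0 < p.natDegree) (hc : p.derivative.eval c = 0) {U : Set ℂ} (hU : U ∈ 𝓝 c) :
    ∀ᶠ a in 𝓝[≠] c, ∃ b ∈ U, b ≠ a ∧ p.eval b = p.eval a := by
  set q := p - C (p.eval c)
  have hq' : q.derivative ≠ 0 := by
    simpa [q] using mt derivative_eq_zero.1 hp.ne'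
  have hq : q ≠ 0 := fun h => hq' (by rw [h, derivative_zero])
  have hqc : q.IsRoot c := by simp [q]
  have hm : 2 ≤ q.rootMultiplicity c := by
    have h1 : 0 < q.derivative.rootMultiplicity c :=
      (rootMultiplicity_pos hq').2 (by simpa [q] using hc)
    have h2 := derivative_rootMultiplicity_of_root hqc
    omega
  obtain ⟨φ, w, hw, hφ, hφc, hpow⟩ :=
    exists_hasStrictDerivAt_pow_rootMultiplicity_eq_eval hq hqc
  filter_upwards [hφ.eventually_exists_ne_pow_eq hw hφc hm (inter_mem hU hpow),
    nhdsWithin_le_nhds hpow] with a ⟨b, ⟨hbU, hb⟩, hba, hφba⟩ ha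
  refine ⟨b, hbU, hba, ?_⟩
  have hqba : q.eval b = q.eval a := by rw [← hb, ← ha, hφba]
  simpa [q] using hqba

theorem IsPreconnected.frequently_mem_nhdsNE {X : Type*} [TopologicalSpace X] [T1Space X]
    {s : Set X} (hs : IsPreconnected s) {x y : X} (hx : x ∈ s) (hy : y ∈ s) (hyx : y ≠ x) :
    ∃ᶠ z in 𝓝[≠] x, z ∈ s := by
  intro hnot
  obtain ⟨V, hVs, hVo, hxV⟩ := eventually_nhds_iff.1 (eventually_nhdsWithin_iff.1 hnot)
  obtain ⟨z, hzs, hzV, hzx⟩ := hs V {x}ᶜ hVo isOpen_compl_singleton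
    (fun z _ => (eq_or_ne z x).imp (fun (h : z = x) => h ▸ hxV) id) ⟨x, hx, hxV⟩ ⟨y, hy, hyx⟩
  exact hVs z hzV hzx hzs

theorem exists_bound_iterate_apply_iff {α : Type*} [Norm α] (f : α → α) (z : α) :
    (∃ M : ℝ, ∀ n, ‖f^[n] (f z)‖ ≤ M) ↔ ∃ M : ℝ, ∀ n, ‖f^[n] z‖ ≤ M := by
  simp only [← Function.iterate_succ_apply]
  refine ⟨fun ⟨M, hM⟩ => ⟨max M ‖z‖, fun n => ?_⟩, fun ⟨M, hM⟩ => ⟨M, fun n => hM _⟩⟩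
  cases n with
  | zero => exact le_max_right _ _
  | succ n => exact (hM n).trans (le_max_left _ _)

section Cuts

variable {P : ℂ → ℂ} {K : Set ℂ}

theorem PolyCut.eq_root_of_mem_carrier (Γ : PolyCut P K) {x : ℂ} (hxK : x ∈ K)
    (hx : x ∈ Γ.carrier) : x = Γ.root := by
  rcases hx with (⟨t, ht, rfl⟩ | ⟨t, ht, rfl⟩) | hroot
  · exact absurd hxK (Γ.rayR_out t ht)
  · exact absurd hxK (Γ.rayL_out t ht)
  · exact hroot

theorem PolyCut.mem_wedge_of_mem_closure (Γ : PolyCut P K) {x : ℂ} (hx : x ∈ closure Γ.wedge)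
    (hxΓ : x ∉ Γ.carrier) : x ∈ Γ.wedge := by
  obtain ⟨y, hy⟩ := closure_nonempty_iff.1 ⟨x, hx⟩
  have hW : Γ.wedge = connectedComponentIn Γ.carrierᶜ y := Γ.wedge_comp y hy
  have hpre : IsPreconnected (insert x Γ.wedge) :=
    (hW ▸ isPreconnected_connectedComponentIn).subset_closure (subset_insert _ _)
      (insert_subset hx subset_closure)
  have hsub : insert x Γ.wedge ⊆ Γ.carrierᶜ :=
    insert_subset hxΓ (hW ▸ connectedComponentIn_subset _ _)
  exact hW ▸ hpre.subset_connectedComponentIn (mem_insert_of_mem _ hy) hsub (mem_insert x _)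

variable {Zc : Set (PolyCut P K)}

theorem mem_avoidingSet_iff (hK : ∀ z, P z ∈ K ↔ z ∈ K) {x : ℂ} :
    x ∈ avoidingSet P K Zc ↔ x ∉ ⋃ Γ ∈ Zc, Γ.wedge ∧ P x ∈ avoidingSet P K Zc := by
  simp only [avoidingSet, mem_ofPred_eq, hK, ← Function.iterate_succ_apply]
  refine ⟨fun ⟨hxK, h⟩ => ⟨h 0, hxK, fun n => h (n + 1)⟩, fun ⟨h0, hxK, h⟩ => ⟨hxK, ?_⟩⟩
  rintro (_ | n)
  exacts [h0, h n]

theorem exists_eq_root_of_mem_closure_wedges (hZ : Zc.Finite) {x : ℂ}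
    (hx : x ∈ avoidingSet P K Zc) (hcl : x ∈ closure (⋃ Γ ∈ Zc, Γ.wedge)) :
    ∃ Γ ∈ Zc, x = Γ.root := by
  rw [hZ.closure_biUnion] at hcl
  obtain ⟨Γ, hΓ, hxΓ⟩ := mem_iUnion₂.1 hcl
  refine ⟨Γ, hΓ, Γ.eq_root_of_mem_carrier hx.1 (by_contra fun hcar => hx.2 0 ?_)⟩
  exact mem_biUnion hΓ (Γ.mem_wedge_of_mem_closure hxΓ hcar)

end Cuts

theorem critical_point_in_avoiding_set_is_root_general
    (p : Polynomial ℂ) (hdeg : 1 < p.natDegree)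
    (P : ℂ → ℂ) (hP : P = fun z => p.eval z)
    (K : Set ℂ)
    (hK : K = {z : ℂ | ∃ M : ℝ, ∀ n : ℕ, ‖P^[n] z‖ ≤ M})
    (Zc : Set (PolyCut P K)) (hZ : IsAdmissible P K Zc)
    (A : Set ℂ) (hA : A = avoidingSet P K Zc)
    (hAconn : IsConnected A)
    (hinj : Set.InjOn P A)
    (hrep : ∀ z ∈ A, ∀ n : ℕ, 0 < n → P^[n] z = z →
      1 < ‖deriv (P^[n]) z‖ ∨ ∃ Γ ∈ Zc, z = Γ.root)
    (c : ℂ) (hc : c ∈ A) (hcrit : p.derivative.eval c = 0) :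
    ∃ Γ ∈ Zc, c = Γ.root := by
  subst hA
  have hKinv : ∀ z, P z ∈ K ↔ z ∈ K := by
    subst hK
    exact exists_bound_iterate_apply_iff P
  have hmaps {x : ℂ} (hx : x ∈ avoidingSet P K Zc) : P x ∈ avoidingSet P K Zc :=
    ((mem_avoidingSet_iff hKinv).1 hx).2
  by_cases hsingle : ∀ a ∈ avoidingSet P K Zc, a = c
  · -- `c` is then a superattracting fixed point
    have hPc : P c = c := hsingle _ (hmaps hc)
    refine (hrep c hc 1 one_pos (by simpa using hPc)).resolve_left ?_
    simp [hP, Polynomial.deriv, hcrit]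
  push Not at hsingle
  obtain ⟨a₀, ha₀, ha₀c⟩ := hsingle
  refine exists_eq_root_of_mem_closure_wedges hZ.1 hc (mem_closure_iff_nhds.2 fun U hU => ?_)
  obtain ⟨a, haA, b, hbU, hba, hpba⟩ :=
    ((hAconn.isPreconnected.frequently_mem_nhdsNE hc ha₀ ha₀c).and_eventually
      (eventually_exists_ne_eval_eq_of_derivative_eval_eq_zero (by omega) hcrit hU)).exists
  have hPba : P b = P a := by simp [hP, hpba]
  refine ⟨b, hbU, by_contra fun hbW => hba (hinj ?_ haA hPba)⟩
  exact (mem_avoidingSet_iff hKinv).2 ⟨hbW, hPba ▸ hmaps haA⟩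

/-- let `P` be a polynomial of degree `> 1` with connected filled Julia
set `K_P`, `Zc` an admissible collection of cuts such that `P` is injective on the
connected avoiding set `A = A_P(Zc)`, the root points of cuts of `Zc` are repelling
fixed points, and `A` has no non-repelling periodic points other than possibly these
root points. If `c ∈ A` is a critical point of `P`, then `c` is a root point of some
cut in `Zc`. -/
theorem critical_point_in_avoiding_set_is_root
    (p : Polynomial ℂ) (hdeg : 1 < p.natDegree)
    (P : ℂ → ℂ) (hP : P = fun z => p.eval z)
    (K : Set ℂ)
    (hK : K = {z : ℂ | ∃ M : ℝ, ∀ n : ℕ, ‖P^[n] z‖ ≤ M})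
    (hKconn : IsConnected K)
    (Zc : Set (PolyCut P K)) (hZ : IsAdmissible P K Zc)
    (A : Set ℂ) (hA : A = avoidingSet P K Zc)
    (hAconn : IsConnected A)
    (hinj : Set.InjOn P A)
    (hrootfix : ∀ Γ ∈ Zc, P Γ.root = Γ.root ∧ 1 < ‖deriv P Γ.root‖)
    (hrep : ∀ z ∈ A, ∀ n : ℕ, 0 < n → P^[n] z = z →
      1 < ‖deriv (P^[n]) z‖ ∨ ∃ Γ ∈ Zc, z = Γ.root)
    (c : ℂ) (hc : c ∈ A) (hcrit : p.derivative.eval c = 0) :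
    ∃ Γ ∈ Zc, c = Γ.root :=
  critical_point_in_avoiding_set_is_root_general p hdeg P hP K hK Zc hZ A hA hAconn hinj hrep c hc
    hcrit
end
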